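/- In dimension d = 3, if v ≥ 0 with v(0) > 0 and ∫_1^∞ v(r) r² dr < ∞, then the scattering length a(v) is strictly smaller than ã(v) := (1/(8π)) ∫_{ℝ³} v(|x|) dx, i.e. 8π a(v) < ∫_{ℝ³} v(|x|) dx. -/

import Mathlib

set_option maxHeartbeats 1600000

open Filter MeasureTheory Set

lemma radial_integrableOn_aux (v : ℝ → ℝ) (hm : Measurable v)
    (h : Integrable (fun x : EuclideanSpace ℝ (Fin 3) => v ‖x‖)) :
    IntegrableOn (fun r : ℝ => v r * r ^ 2) (Set.Ioi 0) := by
  set E := EuclideanSpace ℝ (Fin 3)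
  set μ : Measure E := volume
  have hms : MeasurableSet ({(0:E)}ᶜ) := (measurableSet_singleton (0:E)).compl
  have h0 : IntegrableOn (fun x : E => v ‖x‖) ({0}ᶜ) μ := h.integrableOn
  have hemb : MeasurableEmbedding (Subtype.val : ({(0:E)}ᶜ : Set E) → E) :=
    MeasurableEmbedding.subtype_coe hms
  have h1 : Integrable ((fun x : E => v ‖x‖) ∘ Subtype.val)
      (μ.comap (Subtype.val : ({(0:E)}ᶜ : Set E) → E)) := by
    rw [← hemb.integrable_map_iff, map_comap_subtype_coe hms]
    exact h0
  have hmp := (μ.measurePreserving_homeomorphUnitSphereProd)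
  have h2 : Integrable ((fun p : Metric.sphere (0:E) 1 × Set.Ioi (0:ℝ) => v p.2) ∘
        (homeomorphUnitSphereProd E))
      (μ.comap Subtype.val) := by
    refine h1.congr (Filter.Eventually.of_forall fun x => ?_)
    simp [homeomorphUnitSphereProd]
  rw [hmp.integrable_comp_emb (Homeomorph.measurableEmbedding _)] at h2
  have hsph : μ.toSphere ≠ 0 := by
    intro h'
    have h'' := Measure.toSphere_apply_univ (μ := μ)
    rw [h'] at h''
    simp only [Measure.coe_zero, Pi.zero_apply] at h''
    have hb : μ (Metric.ball (0:E) 1) ≠ 0 :=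
      (Metric.measure_ball_pos μ 0 one_pos).ne'
    have hdim : 0 < Module.finrank ℝ E := Module.finrank_pos
    exact absurd h''.symm (mul_ne_zero (by simpa using hdim.ne') hb)
  have hne : (ae μ.toSphere).NeBot := ae_neBot.mpr hsph
  obtain ⟨x₀, h3⟩ := h2.prod_right_ae.exists
  have hdim3 : Module.finrank ℝ E - 1 = 2 := by
    simp [E, finrank_euclideanSpace]
  rw [hdim3] at h3
  rw [Measure.volumeIoiPow, integrable_withDensity_iff] at h3
  · have hms' : MeasurableSet (Set.Ioi (0:ℝ)) := measurableSet_Ioi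
    have hemb' : MeasurableEmbedding (Subtype.val : (Set.Ioi (0:ℝ)) → ℝ) :=
      MeasurableEmbedding.subtype_coe hms'
    have h4 : Integrable ((fun r : ℝ => v r * r ^ 2) ∘ Subtype.val)
        (volume.comap (Subtype.val : (Set.Ioi (0:ℝ)) → ℝ)) := by
      refine h3.congr ?_
      refine Filter.Eventually.of_forall fun r => ?_
      have : ((ENNReal.ofReal ((r:ℝ) ^ 2)).toReal) = (r:ℝ)^2 :=
        ENNReal.toReal_ofReal (by positivity)
      simp [Function.comp, this]
    rwa [← hemb'.integrable_map_iff, map_comap_subtype_coe hms'] at h4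
  · exact (measurable_subtype_coe.pow_const 2).ennreal_ofReal
  · exact Filter.Eventually.of_forall fun r => ENNReal.ofReal_lt_top

lemma radial_integral_aux (v : ℝ → ℝ) :
    (∫ x : EuclideanSpace ℝ (Fin 3), v ‖x‖) = 4 * Real.pi * ∫ r in Set.Ioi (0:ℝ), r ^ 2 * v r := by
  have h := MeasureTheory.integral_fun_norm_addHaar (volume : Measure (EuclideanSpace ℝ (Fin 3))) v
  have hdim : Module.finrank ℝ (EuclideanSpace ℝ (Fin 3)) = 3 := by
    simp [finrank_euclideanSpace]
  rw [hdim] at h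
  have hball : (volume (Metric.ball (0 : EuclideanSpace ℝ (Fin 3)) 1)).toReal
      = 4 / 3 * Real.pi := by
    rw [EuclideanSpace.volume_ball]
    have h3 : (Fintype.card (Fin 3) : ℝ) = 3 := by simp
    have hG : Real.Gamma ((Fintype.card (Fin 3) : ℝ) / 2 + 1) = 3 / 4 * Real.sqrt Real.pi := by
      rw [h3]
      have e2 : Real.Gamma ((3:ℝ)/2 + 1) = (3/2) * Real.Gamma (3/2) := by
        rw [Real.Gamma_add_one (by norm_num)]
      rw [e2]
      have e3 : Real.Gamma ((3:ℝ)/2) = (1/2) * Real.Gamma (1/2) := by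
        have e4 : (3:ℝ)/2 = 1/2 + 1 := by norm_num
        rw [e4, Real.Gamma_add_one (by norm_num)]
      rw [e3, Real.Gamma_one_half_eq]
      ring
    rw [hG]
    have hs : Real.sqrt Real.pi ^ Fintype.card (Fin 3) = Real.pi * Real.sqrt Real.pi := by
      have hc : Fintype.card (Fin 3) = 3 := by simp
      rw [hc]
      have := Real.sq_sqrt Real.pi_pos.le
      nlinarith [Real.sqrt_nonneg Real.pi]
    rw [hs]
    have hsp : Real.sqrt Real.pi > 0 := Real.sqrt_pos.mpr Real.pi_pos
    rw [ENNReal.toReal_mul]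
    simp only [ENNReal.ofReal_one, one_pow, ENNReal.toReal_one, one_mul]
    rw [ENNReal.toReal_ofReal (by positivity)]
    field_simp
  rw [h, measureReal_def, hball]
  have hy : ∀ y : ℝ, y ^ (3-1) • v y = y ^ 2 * v y := fun y => rfl
  simp only [hy, nsmul_eq_mul, smul_eq_mul]
  ring

/-- In dimension 3, if `v ≥ 0`, `v(0) > 0` and `∫_1^∞ v(r) r² dr < ∞`,
then `8π a(v) < ∫_{ℝ³} v(|x|) dx`, i.e. the scattering length is strictly smaller than
`ã(v) = (1/(8π)) ∫ v(|x|) dx`. -/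
theorem scattering_length_lt_first_Born_approximation
    (v u : ℝ → ℝ) (a : ℝ)
    (hv_meas : Measurable v)
    (hv_nonneg : ∀ r, 0 ≤ v r)
    (hv0 : 0 < v 0)
    (hv_cont0 : ContinuousAt v 0)
    (hv_int : IntegrableOn (fun r => v r * r ^ 2) (Set.Ici (1 : ℝ)))
    (hv_intR3 : Integrable (fun x : EuclideanSpace ℝ (Fin 3) => v ‖x‖))
    (hu0 : u 0 = 0)
    (hu_nonneg : ∀ r ≥ 0, 0 ≤ u r)
    (hu_diff : ∀ r > 0, DifferentiableAt ℝ u r)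
    (hu_diff2 : ∀ r > 0, DifferentiableAt ℝ (deriv u) r)
    (hscatt : ∀ r > 0, deriv (deriv u) r = (1 / 2) * u r * v r)
    (hnorm : Tendsto (deriv u) atTop (nhds 1))
    (ha : Tendsto (fun R => deriv u R * R - u R) atTop (nhds a)) :
    8 * Real.pi * a < ∫ x : EuclideanSpace ℝ (Fin 3), v ‖x‖ := by
  have hπ := Real.pi_pos
  have hQint : IntegrableOn (fun r : ℝ => r ^ 2 * v r) (Set.Ioi 0) :=
    (radial_integrableOn_aux v hv_meas hv_intR3).congr_fun
      (fun r _ => mul_comm (v r) (r ^ 2)) measurableSet_Ioi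
  -- basic ODE facts
  have hu_cont : ∀ r > 0, ContinuousAt u r := fun r hr => (hu_diff r hr).continuousAt
  have hu'_cont : ∀ r > 0, ContinuousAt (deriv u) r := fun r hr => (hu_diff2 r hr).continuousAt
  have hmono : MonotoneOn (deriv u) (Set.Ioi 0) := by
    apply monotoneOn_of_deriv_nonneg (convex_Ioi 0)
    · exact fun r hr => (hu'_cont r hr).continuousWithinAt
    · intro r hr
      rw [interior_Ioi] at hr
      exact (hu_diff2 r hr).differentiableWithinAt
    · intro r hr
      rw [interior_Ioi] at hr
      rw [hscatt r hr]
      have h1 := hu_nonneg r (le_of_lt hr)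
      have h2 := hv_nonneg r
      positivity
  have hu'le : ∀ r > 0, deriv u r ≤ 1 := by
    intro r hr
    refine ge_of_tendsto hnorm ?_
    filter_upwards [eventually_ge_atTop r] with t ht
    exact hmono hr (lt_of_lt_of_le hr ht) ht
  have hanti : AntitoneOn (fun r => u r - r) (Set.Ioi 0) := by
    apply antitoneOn_of_deriv_nonpos (convex_Ioi 0)
    · exact fun r hr => ((hu_cont r hr).sub continuousAt_id).continuousWithinAt
    · intro r hr
      rw [interior_Ioi] at hr
      exact ((hu_diff r hr).sub differentiableAt_id).differentiableWithinAt
    · intro r hr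
      rw [interior_Ioi] at hr
      have hd : HasDerivAt (fun r => u r - r) (deriv u r - 1) r :=
        ((hu_diff r hr).hasDerivAt).sub (hasDerivAt_id r)
      rw [hd.deriv]
      linarith [hu'le r hr]
  have hderivg : ∀ r > 0, HasDerivAt (fun t => deriv u t * t - u t) ((1/2) * u r * v r * r) r := by
    intro r hr
    have h1 : HasDerivAt (deriv u) (deriv (deriv u) r) r := (hu_diff2 r hr).hasDerivAt
    have h2 : HasDerivAt (fun t => deriv u t * t) (deriv (deriv u) r * r + deriv u r * 1) r :=
      h1.mul (hasDerivAt_id r)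
    have h3 := h2.sub (hu_diff r hr).hasDerivAt
    refine h3.congr_deriv ?_
    rw [hscatt r hr]; ring
  -- integrability facts
  have hQii : ∀ x y : ℝ, 0 < x → x ≤ y →
      IntervalIntegrable (fun r : ℝ => r ^ 2 * v r) volume x y := by
    intro x y hx hxy
    rw [intervalIntegrable_iff_integrableOn_Ioc_of_le hxy]
    exact hQint.mono_set (fun r hr => hx.trans hr.1)
  have hWii : ∀ s R : ℝ, 0 < s → s ≤ R →
      IntervalIntegrable (fun r => (1/2) * u r * v r * r) volume s R := by
    intro s R hs hsR
    rw [intervalIntegrable_iff_integrableOn_Ioc_of_le hsR]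
    have hsub : Set.Ioc s R ⊆ Set.Ioi (0:ℝ) := fun r hr => hs.trans hr.1
    have hucont : ContinuousOn u (Set.Icc s R) := fun r hr =>
      (hu_cont r (lt_of_lt_of_le hs hr.1)).continuousWithinAt
    obtain ⟨M, hM⟩ := isCompact_Icc.exists_bound_of_continuousOn hucont
    have hM0 : 0 ≤ M := le_trans (norm_nonneg _) (hM s ⟨le_refl s, hsR⟩)
    refine Integrable.mono ((hQint.mono_set hsub).const_mul (M/(2*s))) ?_ ?_
    · have hu_aesm : AEStronglyMeasurable u (volume.restrict (Set.Ioc s R)) :=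
        ((hucont.mono Set.Ioc_subset_Icc_self).aestronglyMeasurable measurableSet_Ioc)
      exact ((aestronglyMeasurable_const.mul hu_aesm).mul
        (hv_meas.aestronglyMeasurable.restrict)).mul aestronglyMeasurable_id
    · filter_upwards [ae_restrict_mem measurableSet_Ioc] with r hr
      have h1 : 0 < r := hs.trans hr.1
      have h2 : u r ≤ M := le_trans (le_abs_self _) (hM r ⟨hr.1.le, hr.2⟩)
      have hur : 0 ≤ u r := hu_nonneg r h1.le
      have hvr : 0 ≤ v r := hv_nonneg r
      have hWnn : (0:ℝ) ≤ (1/2) * u r * v r * r :=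
        mul_nonneg (mul_nonneg (mul_nonneg (by norm_num) hur) hvr) h1.le
      have hRnn : (0:ℝ) ≤ M/(2*s) * (r^2 * v r) :=
        mul_nonneg (div_nonneg hM0 (by linarith)) (mul_nonneg (sq_nonneg r) hvr)
      rw [Real.norm_eq_abs, Real.norm_eq_abs, abs_of_nonneg hWnn, abs_of_nonneg hRnn]
      conv_rhs => rw [div_mul_eq_mul_div]
      rw [le_div_iff₀ (by linarith : (0:ℝ) < 2*s)]
      have hsr : s ≤ r := hr.1.le
      have hvrr : 0 ≤ v r * r := mul_nonneg hvr h1.le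
      have h3 : s * (u r * (v r * r)) ≤ r * (u r * (v r * r)) :=
        mul_le_mul_of_nonneg_right hsr (mul_nonneg hur hvrr)
      have h4 : u r * (v r * r * r) ≤ M * (v r * r * r) :=
        mul_le_mul_of_nonneg_right h2 (mul_nonneg hvrr h1.le)
      nlinarith [h3, h4]
  have hFTC : ∀ s R : ℝ, 0 < s → s ≤ R →
      deriv u R * R - u R = (deriv u s * s - u s) + ∫ r in s..R, (1/2) * u r * v r * r := by
    intro s R hs hsR
    have h := intervalIntegral.integral_eq_sub_of_hasDerivAt (f := fun t => deriv u t * t - u t)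
      (f' := fun r => (1/2) * u r * v r * r) (a := s) (b := R) ?_ (hWii s R hs hsR)
    · have h2 : ∫ r in s..R, (1/2) * u r * v r * r
          = (deriv u R * R - u R) - (deriv u s * s - u s) := h
      linarith [h2]
    · intro r hrmem
      rw [Set.uIcc_of_le hsR] at hrmem
      exact hderivg r (lt_of_lt_of_le hs hrmem.1)
  -- neighbourhood of 0 where v is large
  obtain ⟨ε, hε, hvε0⟩ := Metric.eventually_nhds_iff.mp
    (hv_cont0 (lt_mem_nhds (show v 0/2 < v 0 by linarith)))
  have hvε : ∀ r : ℝ, dist r 0 < ε → v 0 / 2 < v r := fun r hr => hvε0 hr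
  -- lower bound on small pieces of the Q-integral
  have hPos : ∀ b c : ℝ, 0 < b → b < c → c < ε →
      (v 0/2) * b^2 * (c - b) ≤ ∫ r in Set.Ioc b c, r^2 * v r := by
    intro b c hb hbc hcε
    have hint : IntegrableOn (fun r : ℝ => r^2 * v r) (Set.Ioc b c) :=
      hQint.mono_set (fun r hr => hb.trans hr.1)
    have hconst : IntegrableOn (fun _ : ℝ => (v 0/2) * b^2) (Set.Ioc b c) :=
      integrableOn_const measure_Ioc_lt_top.ne
    have hmon := setIntegral_mono_on hconst hint measurableSet_Ioc ?_
    · calc (v 0/2)*b^2*(c-b) = (volume (Set.Ioc b c)).toReal • ((v 0/2)*b^2) := by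
            rw [Real.volume_Ioc, ENNReal.toReal_ofReal (by linarith), smul_eq_mul]
            ring
        _ = ∫ _ in Set.Ioc b c, (v 0/2)*b^2 := (setIntegral_const _).symm
        _ ≤ ∫ r in Set.Ioc b c, r^2*v r := hmon
    · intro r hr
      have hr0 : 0 < r := hb.trans hr.1
      have hvr : v 0/2 < v r := hvε r (by
        rw [Real.dist_eq, sub_zero, abs_of_pos hr0]
        linarith [hr.2])
      have hb2 : b^2 ≤ r^2 := by nlinarith [hr.1]
      nlinarith [hv_nonneg r, sq_nonneg r, mul_le_mul_of_nonneg_left hvr.le (sq_nonneg r)]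
  -- comparison of the two integrands when u ≤ id
  have hWleQ : ∀ x y : ℝ, 0 < x → x ≤ y → (∀ z, x ≤ z → z ≤ y → u z ≤ z) →
      (∫ r in x..y, (1/2) * u r * v r * r) ≤ ∫ r in x..y, (1/2) * (r^2 * v r) := by
    intro x y hx hxy hzle
    apply intervalIntegral.integral_mono_on hxy (hWii x y hx hxy)
      ((hQii x y hx hxy).const_mul (1/2))
    intro z hzm
    have hz0 : 0 < z := lt_of_lt_of_le hx hzm.1
    have h1 : 0 ≤ (z - u z) * v z * z :=
      mul_nonneg (mul_nonneg (sub_nonneg.2 (hzle z hzm.1 hzm.2)) (hv_nonneg z)) hz0.le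
    nlinarith [h1]
  -- the key eventual bound
  have key : ∃ c > 0, ∀ᶠ R in atTop, deriv u R * R - u R
      ≤ (∫ r in Set.Ioi (0:ℝ), r ^ 2 * v r)/2 - c := by
    by_cases hA : ∀ r > 0, u r ≤ r
    · obtain ⟨J, hJ⟩ : ∃ J, J = ∫ r in Set.Ioi (0:ℝ), r ^ 2 * v r := ⟨_, rfl⟩
      rw [← hJ]
      -- strictness at ε/2
      have hρpos : 0 < ε/2 := half_pos hε
      have hρlt : u (ε/2) < ε/2 := by
        rcases lt_or_eq_of_le (hA (ε/2) hρpos) with hlt | heq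
        · exact hlt
        · exfalso
          have hid : ∀ r, 0 < r → r ≤ ε/2 → u r = r := by
            intro r hr hrle
            have h1 : u r - r ≤ 0 := by linarith [hA r hr]
            have h2 := hanti (Set.mem_Ioi.2 hr) (Set.mem_Ioi.2 hρpos) hrle
            simp only at h2
            rw [heq] at h2
            linarith
          set r0 := ε/4 with hr0def
          have hr0 : 0 < r0 := by positivity
          have hder1 : deriv u =ᶠ[nhds r0] fun _ => (1:ℝ) := by
            have hmem : Set.Ioo (0:ℝ) (ε/2) ∈ nhds r0 := Ioo_mem_nhds hr0 (by rw [hr0def]; linarith)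
            filter_upwards [hmem] with x hx
            have hx1 : u =ᶠ[nhds x] id := by
              filter_upwards [Ioo_mem_nhds hx.1 hx.2] with y hy
              exact hid y hy.1 hy.2.le
            rw [hx1.deriv_eq, deriv_id]
          have hzero : deriv (deriv u) r0 = 0 := by
            rw [hder1.deriv_eq]
            exact deriv_const r0 1
          rw [hscatt r0 hr0, hid r0 hr0 (by rw [hr0def]; linarith)] at hzero
          have hv0' : v 0/2 < v r0 := hvε r0 (by
            rw [Real.dist_eq, sub_zero, abs_of_pos hr0, hr0def]; linarith)
          nlinarith
      -- gap neighbourhood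
      obtain ⟨m, hm⟩ : ∃ m, m = (ε/2 - u (ε/2))/2 := ⟨_, rfl⟩
      have hmpos : 0 < m := by rw [hm]; linarith
      have hcontm : ContinuousAt (fun r => r - u r) (ε/2) :=
        continuousAt_id.sub (hu_cont _ hρpos)
      have hev : ∀ᶠ r in nhds (ε/2), m < r - u r := by
        apply hcontm
        apply lt_mem_nhds
        simp only
        rw [hm]; linarith
      obtain ⟨δ0, hδ0, hδball⟩ := Metric.eventually_nhds_iff.mp hev
      obtain ⟨δ, hδdef⟩ : ∃ δ, δ = min (δ0/2) (ε/8) := ⟨_, rfl⟩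
      have hδpos : 0 < δ := by rw [hδdef]; exact lt_min (by linarith) (by linarith)
      obtain ⟨ρ1, hρ1⟩ : ∃ x, x = ε/2 - δ := ⟨_, rfl⟩
      obtain ⟨ρ2, hρ2⟩ : ∃ x, x = ε/2 + δ := ⟨_, rfl⟩
      have hδle : δ ≤ ε/8 := by rw [hδdef]; exact min_le_right _ _
      have hρ1pos : 0 < ρ1 := by rw [hρ1]; linarith
      have hρ12 : ρ1 < ρ2 := by rw [hρ1, hρ2]; linarith
      have hρ2ε : ρ2 < ε := by rw [hρ2]; linarith
      have hgap : ∀ r ∈ Set.Icc ρ1 ρ2, m < r - u r := by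
        intro r hr
        apply hδball
        rw [Real.dist_eq]
        have h1 := hr.1; have h2 := hr.2
        have hδ2 : δ ≤ δ0/2 := by rw [hδdef]; exact min_le_left _ _
        rw [hρ2] at h2; rw [hρ1] at h1
        rw [abs_sub_lt_iff]
        exact ⟨by linarith, by linarith⟩
      obtain ⟨C2, hC2⟩ : ∃ x, x = (1/2) * m * (v 0/2) * ρ1 := ⟨_, rfl⟩
      have hC2pos : 0 < C2 := by
        rw [hC2]
        have : 0 < v 0 / 2 := by linarith
        positivity
      obtain ⟨κ, hκ⟩ : ∃ x, x = C2 * (ρ2 - ρ1) := ⟨_, rfl⟩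
      have hκpos : 0 < κ := by rw [hκ]; exact mul_pos hC2pos (by linarith)
      obtain ⟨s, hs_def⟩ : ∃ x, x = min (ρ1/2) (κ/2) := ⟨_, rfl⟩
      have hspos : 0 < s := by
        rw [hs_def]; exact lt_min (by linarith) (by linarith)
      have hsρ1 : s < ρ1 := by
        have h1 : s ≤ ρ1/2 := hs_def ▸ min_le_left _ _
        linarith
      have hsκ : s ≤ κ/2 := hs_def ▸ min_le_right _ _
      refine ⟨κ/2, by linarith, ?_⟩
      filter_upwards [eventually_ge_atTop ρ2] with R hR
      have hρ2pos : 0 < ρ2 := lt_trans hρ1pos hρ12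
      have hsR : s ≤ R := by linarith
      have hgs : deriv u s * s - u s ≤ s := by
        nlinarith [hu'le s hspos, hu_nonneg s hspos.le, hspos]
      -- split the W-integral
      have e1 : (∫ r in s..ρ1, (1/2) * u r * v r * r) + (∫ r in ρ1..ρ2, (1/2) * u r * v r * r)
          = ∫ r in s..ρ2, (1/2) * u r * v r * r :=
        intervalIntegral.integral_add_adjacent_intervals (hWii s ρ1 hspos hsρ1.le)
          (hWii ρ1 ρ2 hρ1pos hρ12.le)
      have e2 : (∫ r in s..ρ2, (1/2) * u r * v r * r) + (∫ r in ρ2..R, (1/2) * u r * v r * r)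
          = ∫ r in s..R, (1/2) * u r * v r * r :=
        intervalIntegral.integral_add_adjacent_intervals (hWii s ρ2 hspos (by linarith))
          (hWii ρ2 R hρ2pos hR)
      -- Qh pieces
      have hQhii : ∀ x y : ℝ, 0 < x → x ≤ y →
          IntervalIntegrable (fun r : ℝ => (1/2) * (r^2 * v r)) volume x y :=
        fun x y hx hxy => (hQii x y hx hxy).const_mul (1/2)
      have f1 : (∫ r in s..ρ1, (1/2) * (r^2 * v r)) + (∫ r in ρ1..ρ2, (1/2) * (r^2 * v r))
          = ∫ r in s..ρ2, (1/2) * (r^2 * v r) :=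
        intervalIntegral.integral_add_adjacent_intervals (hQhii s ρ1 hspos hsρ1.le)
          (hQhii ρ1 ρ2 hρ1pos hρ12.le)
      have f2 : (∫ r in s..ρ2, (1/2) * (r^2 * v r)) + (∫ r in ρ2..R, (1/2) * (r^2 * v r))
          = ∫ r in s..R, (1/2) * (r^2 * v r) :=
        intervalIntegral.integral_add_adjacent_intervals (hQhii s ρ2 hspos (by linarith))
          (hQhii ρ2 R hρ2pos hR)
      -- piece bounds
      have b1 := hWleQ s ρ1 hspos hsρ1.le (fun z hz1 _ => hA z (lt_of_lt_of_le hspos hz1))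
      have b3 := hWleQ ρ2 R hρ2pos hR (fun z hz1 _ => hA z (lt_of_lt_of_le hρ2pos hz1))
      have b2 : (∫ r in ρ1..ρ2, (1/2) * u r * v r * r)
          ≤ (∫ r in ρ1..ρ2, (1/2) * (r^2 * v r)) - κ := by
        have hmid : (∫ r in ρ1..ρ2, (1/2) * u r * v r * r)
            ≤ ∫ r in ρ1..ρ2, ((1/2) * (r^2 * v r) - C2) := by
          apply intervalIntegral.integral_mono_on hρ12.le (hWii ρ1 ρ2 hρ1pos hρ12.le)
            ((hQhii ρ1 ρ2 hρ1pos hρ12.le).sub intervalIntegrable_const)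
          intro z hz
          have hz0 : 0 < z := lt_of_lt_of_le hρ1pos hz.1
          have hvz : v 0 / 2 < v z := hvε z (by
            rw [Real.dist_eq, sub_zero, abs_of_pos hz0]
            linarith [hz.2])
          have hgz : m < z - u z := hgap z hz
          have q1 : m * (v 0/2) ≤ (z - u z) * v z :=
            mul_le_mul hgz.le hvz.le (by linarith) (by linarith)
          have q2 : (m * (v 0/2)) * ρ1 ≤ ((z - u z) * v z) * z :=
            mul_le_mul q1 hz.1 hρ1pos.le
              (mul_nonneg (by linarith) (by linarith [hv_nonneg z]))
          nlinarith [q2]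
        have hsub : (∫ r in ρ1..ρ2, ((1/2) * (r^2 * v r) - C2))
            = (∫ r in ρ1..ρ2, (1/2) * (r^2 * v r)) - (ρ2 - ρ1) * C2 := by
          rw [intervalIntegral.integral_sub (hQhii ρ1 ρ2 hρ1pos hρ12.le) intervalIntegrable_const,
            intervalIntegral.integral_const, smul_eq_mul]
        rw [hsub] at hmid
        rw [hκ]
        linarith [hmid]
      -- total Q bound
      have hQbound : (∫ r in s..R, (1/2) * (r^2 * v r)) ≤ J/2 := by
        rw [intervalIntegral.integral_const_mul, intervalIntegral.integral_of_le hsR]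
        have : (∫ r in Set.Ioc s R, r^2 * v r) ≤ J := by
          rw [hJ]
          apply setIntegral_mono_set hQint
          · exact Filter.Eventually.of_forall fun r => mul_nonneg (sq_nonneg r) (hv_nonneg r)
          · exact HasSubset.Subset.eventuallyLE (fun r hr => hspos.trans hr.1)
        linarith
      have hFTCsR := hFTC s R hspos hsR
      have hus : 0 ≤ u s := hu_nonneg s hspos.le
      linarith [b1, b2, b3, e1, e2, f1, f2, hQbound, hFTCsR, hgs, hsκ]
    · push_neg at hA
      obtain ⟨t, ht0, htu⟩ := hA
      by_cases hB : ∃ r, t < r ∧ u r ≤ r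
      · obtain ⟨r0, htr0, hur0⟩ := hB
        have hcont : ContinuousOn (fun r => u r - r) (Set.Icc t r0) := fun r hr =>
          ((hu_cont r (lt_of_lt_of_le ht0 hr.1)).sub continuousAt_id).continuousWithinAt
        have h0mem : (0:ℝ) ∈ Set.Icc (u r0 - r0) (u t - t) := ⟨by linarith, by linarith⟩
        obtain ⟨T, hTmem, hTeq⟩ := intermediate_value_Icc' htr0.le hcont h0mem
        replace hTeq : u T - T = 0 := hTeq
        have hT0 : 0 < T := lt_of_lt_of_le ht0 hTmem.1
        have huT : u T = T := by linarith
        have hule : ∀ z, T ≤ z → u z ≤ z := by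
          intro z hTz
          rcases eq_or_lt_of_le hTz with rfl | hlt
          · exact le_of_eq huT
          · have h := hanti (Set.mem_Ioi.2 hT0) (Set.mem_Ioi.2 (hT0.trans hlt)) hTz
            simp only at h
            linarith
        obtain ⟨J, hJ⟩ : ∃ J, J = ∫ r in Set.Ioi (0:ℝ), r ^ 2 * v r := ⟨_, rfl⟩
        rw [← hJ]
        obtain ⟨μ0, hμ0⟩ : ∃ x, x = min T ε := ⟨_, rfl⟩
        have hμpos : 0 < μ0 := hμ0 ▸ lt_min hT0 hε
        have hμT : μ0 ≤ T := hμ0 ▸ min_le_left _ _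
        have hμε : μ0 ≤ ε := hμ0 ▸ min_le_right _ _
        have hb : (0:ℝ) < μ0/2 := by linarith
        have hbc : μ0/2 < 3*μ0/4 := by linarith
        have hcε : 3*μ0/4 < ε := by linarith
        have hcT : 3*μ0/4 < T := by linarith
        obtain ⟨P, hP⟩ : ∃ x, x = (v 0/2) * (μ0/2)^2 * (3*μ0/4 - μ0/2) := ⟨_, rfl⟩
        have hPpos : 0 < P := by
          rw [hP]
          have h1 : 0 < v 0/2 := by linarith
          have h2 : 0 < (μ0/2)^2 := by positivity
          exact mul_pos (mul_pos h1 h2) (by linarith)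
        have hPle : P ≤ ∫ r in Set.Ioc (μ0/2) (3*μ0/4), r^2 * v r := hP ▸ hPos _ _ hb hbc hcε
        refine ⟨P/2, by linarith, ?_⟩
        filter_upwards [eventually_ge_atTop T] with R hR
        have hgT : deriv u T * T - u T ≤ 0 := by
          nlinarith [hu'le T hT0, hT0]
        have hFTCTR := hFTC T R hT0 hR
        have hWQ := hWleQ T R hT0 hR (fun z hz _ => hule z hz)
        have hQval : (∫ r in T..R, (1/2)*(r^2*v r)) = (1/2) * ∫ r in Set.Ioc T R, r^2*v r := by
          rw [intervalIntegral.integral_const_mul, intervalIntegral.integral_of_le hR]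
        have hdisj : Disjoint (Set.Ioc (μ0/2) (3*μ0/4)) (Set.Ioc T R) := by
          rw [Set.disjoint_left]
          intro r h1 h2
          linarith [h1.2, h2.1]
        have hsub1 : Set.Ioc (μ0/2) (3*μ0/4) ⊆ Set.Ioi (0:ℝ) := fun r hr => hb.trans hr.1
        have hsub2 : Set.Ioc T R ⊆ Set.Ioi (0:ℝ) := fun r hr => hT0.trans hr.1
        have hunion := setIntegral_union (f := fun r : ℝ => r^2 * v r) hdisj measurableSet_Ioc
          (hQint.mono_set hsub1) (hQint.mono_set hsub2)
        have hunle : (∫ r in (Set.Ioc (μ0/2) (3*μ0/4) ∪ Set.Ioc T R), r^2*v r) ≤ J := by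
          rw [hJ]
          apply setIntegral_mono_set hQint
          · exact Filter.Eventually.of_forall fun r => mul_nonneg (sq_nonneg r) (hv_nonneg r)
          · exact HasSubset.Subset.eventuallyLE (Set.union_subset hsub1 hsub2)
        linarith [hFTCTR, hWQ, hQval, hunion, hunle, hPle, hgT]
      · push_neg at hB
        obtain ⟨J, hJ⟩ : ∃ J, J = ∫ r in Set.Ioi (0:ℝ), r ^ 2 * v r := ⟨_, rfl⟩
        rw [← hJ]
        obtain ⟨P, hP⟩ : ∃ x, x = (v 0/2) * (ε/4)^2 * (ε/2 - ε/4) := ⟨_, rfl⟩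
        have hPpos : 0 < P := by
          rw [hP]
          have h1 : 0 < v 0/2 := by linarith
          have h2 : 0 < (ε/4)^2 := by positivity
          exact mul_pos (mul_pos h1 h2) (by linarith)
        have hPle : P ≤ ∫ r in Set.Ioc (ε/4) (ε/2), r^2 * v r :=
          hP ▸ hPos (ε/4) (ε/2) (by linarith) (by linarith) (by linarith)
        have hPJ : P ≤ J := by
          refine le_trans hPle ?_
          rw [hJ]
          apply setIntegral_mono_set hQint
          · exact Filter.Eventually.of_forall fun r => mul_nonneg (sq_nonneg r) (hv_nonneg r)
          · exact HasSubset.Subset.eventuallyLE (fun r hr => (by linarith : (0:ℝ) < ε/4).trans hr.1)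
        refine ⟨P/2, by linarith, ?_⟩
        filter_upwards [eventually_ge_atTop (t+1)] with R hR
        have hRt : t < R := by linarith
        have hR0 : 0 < R := ht0.trans hRt
        have huR : R < u R := hB R hRt
        have hg0 : deriv u R * R - u R ≤ 0 := by
          nlinarith [hu'le R hR0]
        linarith [hPJ, hPpos]
  obtain ⟨c, hc, hev⟩ := key
  have haJ : a ≤ (∫ r in Set.Ioi (0:ℝ), r ^ 2 * v r)/2 - c := le_of_tendsto ha hev
  rw [radial_integral_aux v]
  nlinarith [mul_le_mul_of_nonneg_left haJ (by positivity : (0:ℝ) ≤ 8*Real.pi),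
    mul_pos Real.pi_pos hc]
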